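/- arXiv:math/0604280 — 2 statements merged into one kernel-verified Lean document; each statement's English description precedes it below -/
import Mathlib

section
/- For every integer n ≥ 1, the Fibonacci number F_n equals the alternating sum over all integers k of (-1)^k times the binomial coefficient C(n, floor((n-1-5k)/2)). -/
/-- Binomial coefficient `C(m, j)` with integer lower index, zero when `j < 0`. -/
def icho (m : ℕ) (j : ℤ) : ℤ := if 0 ≤ j then (m.choose j.toNat : ℤ) else 0

/-!
Write `S n c = andrewsSum n c = ∑ₖ (-1)^|k| C(n, ⌊(c - 5k)/2⌋)`, so that the theorem is about
`S n (n - 1)`.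
Pascal's rule gives `S (n+1) c = S n c + S n (c - 2)`; shifting `k` by one gives
`S n (c + 5) = -S n c`; and `C(n, j) = C(n, n - j)` together with `k ↦ -k` gives
`S n (2n + 1 - c) = S n c`. The last two force `S n (n - 2) = 0` and `S n (n + 1) = S n n`,
so Pascal's rule turns into the Fibonacci recurrence for the pair `(S n (n - 1), S n n)`,
which starts at `(0, 1)` for `n = 0`.
-/

lemma icho_eq_zero_of_neg {m : ℕ} {j : ℤ} (h : j < 0) : icho m j = 0 := by
  simp [icho, not_le.2 h]

lemma icho_eq_zero_of_lt {m : ℕ} {j : ℤ} (h : (m : ℤ) < j) : icho m j = 0 := by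
  rw [icho, if_pos (by omega), Nat.choose_eq_zero_of_lt (by omega), Nat.cast_zero]

lemma icho_ne_zero {m : ℕ} {j : ℤ} (h : icho m j ≠ 0) : 0 ≤ j ∧ j ≤ m :=
  ⟨not_lt.1 fun hj => h (icho_eq_zero_of_neg hj),
    not_lt.1 fun hj => h (icho_eq_zero_of_lt hj)⟩

lemma icho_succ (n : ℕ) (j : ℤ) : icho (n + 1) j = icho n j + icho n (j - 1) := by
  rcases lt_trichotomy j 0 with hj | rfl | hj
  · simp [icho_eq_zero_of_neg, hj, show j - 1 < 0 by omega]
  · simp [icho]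
  · obtain ⟨i, rfl⟩ : ∃ i : ℕ, j = i + 1 := ⟨(j - 1).toNat, by omega⟩
    simp only [icho, add_sub_cancel_right, if_pos hj.le, if_pos (Int.natCast_nonneg i)]
    rw [show ((i : ℤ) + 1).toNat = i + 1 by omega, Int.toNat_natCast, Nat.choose_succ_succ',
      Nat.cast_add, add_comm]

lemma icho_sub (n : ℕ) (j : ℤ) : icho n ((n : ℤ) - j) = icho n j := by
  rcases lt_or_ge j 0 with hj | hj
  · rw [icho_eq_zero_of_neg hj, icho_eq_zero_of_lt (by omega)]
  rcases le_or_gt j n with hjn | hjn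
  · rw [icho, icho, if_pos hj, if_pos (by omega),
      show ((n : ℤ) - j).toNat = n - j.toNat by omega, Nat.choose_symm (by omega)]
  · rw [icho_eq_zero_of_lt hjn, icho_eq_zero_of_neg (by omega)]

lemma neg_one_pow_natAbs_add_one (k : ℤ) :
    (-1 : ℤ) ^ (k + 1).natAbs = -(-1 : ℤ) ^ k.natAbs := by
  rw [← Int.coe_negOnePow ℤ, ← Int.coe_negOnePow ℤ, Int.negOnePow_succ, Units.val_neg,
    Int.cast_neg]

lemma Int.fdiv_two_eq_ediv (x : ℤ) : x.fdiv 2 = x / 2 :=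
  Int.fdiv_eq_ediv_of_nonneg x (by norm_num)

def andrewsTerm (n : ℕ) (c k : ℤ) : ℤ := (-1 : ℤ) ^ k.natAbs * icho n ((c - 5 * k).fdiv 2)

noncomputable def andrewsSum (n : ℕ) (c : ℤ) : ℤ := ∑ᶠ k : ℤ, andrewsTerm n c k

lemma andrewsTerm_support_finite (n : ℕ) (c : ℤ) :
    (Function.support (andrewsTerm n c)).Finite := by
  refine (Set.finite_Icc (-|c| - 2 * n - 1) |c|).subset fun k hk => ?_
  have hbounds := icho_ne_zero (right_ne_zero_of_mul hk)
  rw [Int.fdiv_two_eq_ediv] at hbounds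
  have := le_abs_self c
  have := neg_abs_le c
  constructor <;> omega

lemma andrewsSum_add_five (n : ℕ) (c : ℤ) : andrewsSum n (c + 5) = -andrewsSum n c := by
  rw [andrewsSum, ← finsum_comp_equiv (Equiv.addRight 1), andrewsSum, ← finsum_neg_distrib]
  refine finsum_congr fun k => ?_
  rw [Equiv.coe_addRight, andrewsTerm, andrewsTerm, neg_one_pow_natAbs_add_one,
    show c + 5 - 5 * (k + 1) = c - 5 * k by ring, neg_mul]

lemma andrewsSum_reflect (n : ℕ) (c : ℤ) : andrewsSum n (2 * n + 1 - c) = andrewsSum n c := by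
  rw [andrewsSum, ← finsum_comp_equiv (Equiv.neg ℤ), andrewsSum]
  refine finsum_congr fun k => ?_
  rw [Equiv.neg_apply, andrewsTerm, andrewsTerm, Int.natAbs_neg, ← icho_sub n]
  congr 2
  rw [Int.fdiv_two_eq_ediv, Int.fdiv_two_eq_ediv]
  omega

lemma andrewsSum_succ (n : ℕ) (c : ℤ) :
    andrewsSum (n + 1) c = andrewsSum n c + andrewsSum n (c - 2) := by
  rw [andrewsSum, andrewsSum, andrewsSum, ← finsum_add_distrib (andrewsTerm_support_finite n c)
    (andrewsTerm_support_finite n (c - 2))]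
  refine finsum_congr fun k => ?_
  have hshift : (c - 5 * k).fdiv 2 - 1 = (c - 2 - 5 * k).fdiv 2 := by
    rw [Int.fdiv_two_eq_ediv, Int.fdiv_two_eq_ediv]
    omega
  rw [andrewsTerm, andrewsTerm, andrewsTerm, icho_succ, hshift, mul_add]

lemma andrewsSum_sub_two (n : ℕ) : andrewsSum n (n - 2) = 0 := by
  have h := andrewsSum_add_five n (n - 2)
  rw [← andrewsSum_reflect, show 2 * (n : ℤ) + 1 - (n - 2 + 5) = n - 2 by ring] at h
  omega

lemma andrewsSum_add_one (n : ℕ) : andrewsSum n (n + 1) = andrewsSum n n := by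
  rw [← andrewsSum_reflect, show 2 * (n : ℤ) + 1 - (n + 1) = n by ring]

lemma andrewsSum_zero_neg_one : andrewsSum 0 (-1) = 0 := by
  refine finsum_eq_zero_of_forall_eq_zero fun k => ?_
  by_contra hk
  have hbounds := icho_ne_zero (right_ne_zero_of_mul hk)
  rw [Int.fdiv_two_eq_ediv] at hbounds
  omega

lemma andrewsSum_zero_zero : andrewsSum 0 0 = 1 := by
  rw [andrewsSum, finsum_eq_single _ 0 fun k hk => ?_]
  · rfl
  by_contra hterm
  have hbounds := icho_ne_zero (right_ne_zero_of_mul hterm)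
  rw [Int.fdiv_two_eq_ediv] at hbounds
  omega

lemma andrewsSum_eq_fib (n : ℕ) :
    andrewsSum n (n - 1) = Nat.fib n ∧ andrewsSum n n = Nat.fib (n + 1) := by
  induction n with
  | zero => exact ⟨andrewsSum_zero_neg_one, andrewsSum_zero_zero⟩
  | succ n ih =>
    push_cast
    refine ⟨?_, ?_⟩
    · rw [add_sub_cancel_right, andrewsSum_succ, andrewsSum_sub_two, ih.2, add_zero]
    · rw [andrewsSum_succ, andrewsSum_add_one, show (n : ℤ) + 1 - 2 = n - 1 by ring, ih.1, ih.2,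
        Nat.fib_add_two, Nat.cast_add, add_comm]

theorem andrews_identity_two_general (n : ℕ) :
    (Nat.fib n : ℤ) =
      ∑ᶠ k : ℤ, (-1 : ℤ) ^ k.natAbs * icho n (((n : ℤ) - 1 - 5 * k).fdiv 2) :=
  (andrewsSum_eq_fib n).1.symm

/-- Andrews' identity (2):
`F_n = Σ_{k ∈ ℤ} (-1)^k C(n, ⌊(n-1-5k)/2⌋)` for `n ≥ 1`. -/
theorem andrews_identity_two (n : ℕ) (hn : 1 ≤ n) :
    (Nat.fib n : ℤ) =
      ∑ᶠ k : ℤ, (-1 : ℤ) ^ k.natAbs * icho n (((n : ℤ) - 1 - 5 * k).fdiv 2) :=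
  andrews_identity_two_general n
end

section
/- For every n ≥ 2, F_{2n-2} = Σ_{j=0}^{∞} [ ((5j+2)/n)·C(2n, n-5j-2) - ((5j+3)/n)·C(2n, n-5j-3) ]. -/
lemma icho_neg (m : ℕ) {t : ℤ} (h : t < 0) : icho m t = 0 := by
  simp [icho, not_le.mpr h]

lemma icho_of_gt (m : ℕ) {t : ℤ} (h : (m : ℤ) < t) : icho m t = 0 := by
  have h0 : (0:ℤ) ≤ t := le_trans (Int.ofNat_nonneg m) h.le
  simp only [icho, if_pos h0]
  have : m < t.toNat := by omega
  simp [Nat.choose_eq_zero_of_lt this]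

lemma icho_pascal (m : ℕ) (t : ℤ) : icho (m+1) t = icho m t + icho m (t-1) := by
  rcases lt_trichotomy t 0 with h | h | h
  · rw [icho_neg _ h, icho_neg _ h, icho_neg _ (by omega)]; ring
  · subst h; simp [icho]
  · have h0 : (0:ℤ) ≤ t := h.le
    have h1 : (0:ℤ) ≤ t - 1 := by omega
    simp only [icho, if_pos h0, if_pos h1]
    obtain ⟨k, rfl⟩ : ∃ k : ℕ, t = (k:ℤ) + 1 := ⟨(t-1).toNat, by omega⟩
    have e1 : ((k:ℤ)+1).toNat = k + 1 := by omega
    have e2 : ((k:ℤ)+1-1).toNat = k := by omega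
    rw [e1, e2]
    push_cast [Nat.choose_succ_succ]
    ring

lemma icho_symm (m : ℕ) (t : ℤ) : icho m t = icho m ((m:ℤ) - t) := by
  rcases lt_trichotomy t 0 with h | h | h
  · rw [icho_neg _ h, icho_of_gt _ (by omega)]
  · subst h; simp [icho, Nat.choose_self]
  · rcases le_or_gt t (m:ℤ) with h2 | h2
    · have h0 : (0:ℤ) ≤ t := h.le
      have h1 : (0:ℤ) ≤ (m:ℤ) - t := by omega
      simp only [icho, if_pos h0, if_pos h1]
      have e : ((m:ℤ) - t).toNat = m - t.toNat := by omega
      rw [e, Nat.choose_symm (by omega)]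
    · rw [icho_of_gt _ h2, icho_neg _ (by omega)]

/-- Sum of `C(m, i)` over `i ≡ a (mod 5)`, `0 ≤ i ≤ m`. -/
def CS (m : ℕ) (a : ℤ) : ℤ := ∑ j ∈ Finset.range (m+1), icho m (a % 5 + 5*j)

lemma CS_congr (m : ℕ) {a b : ℤ} (h : a % 5 = b % 5) : CS m a = CS m b := by
  unfold CS; rw [h]

/-- helper: extend a range-sum past the point where terms vanish -/
lemma sum_ext (f : ℕ → ℤ) {N1 N2 : ℕ} (hle : N1 ≤ N2)
    (h : ∀ j, N1 ≤ j → f j = 0) :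
    ∑ j ∈ Finset.range N2, f j = ∑ j ∈ Finset.range N1, f j := by
  rw [← Finset.sum_subset (Finset.range_subset_range.mpr hle)]
  intro x hx hnx
  exact h x (by simpa using hnx)

lemma window (m : ℕ) (b : ℤ) (N : ℕ) (hb : b ≤ b % 5) (hN : (m:ℤ) < b + 5*N) :
    ∑ j ∈ Finset.range N, icho m (b + 5*j) = CS m b := by
  -- d : number of initial zero terms
  obtain ⟨d, hd⟩ : ∃ d : ℕ, b + 5*d = b % 5 := by
    refine ⟨((b % 5 - b)/5).toNat, ?_⟩
    have : (5:ℤ) ∣ (b % 5 - b) := by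
      have := Int.emod_emod_of_dvd b (dvd_refl (5:ℤ))
      omega
    omega
  set M := d + (m + 1 + N) with hM
  have hext1 : ∑ j ∈ Finset.range N, icho m (b + 5*j) = ∑ j ∈ Finset.range M, icho m (b + 5*j) := by
    refine (sum_ext _ (by omega) ?_).symm
    intro j hj
    exact icho_of_gt m (by push_cast; omega)
  have hext2 : CS m b = ∑ j ∈ Finset.range (m + 1 + N), icho m (b % 5 + 5*j) := by
    unfold CS
    refine (sum_ext _ (by omega) ?_).symm
    intro j hj
    exact icho_of_gt m (by push_cast; omega)
  rw [hext1, hext2]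
  have hsplit : ∑ j ∈ Finset.range M, icho m (b + 5*j)
      = ∑ j ∈ Finset.range d, icho m (b + 5*j) + ∑ j ∈ Finset.Ico d M, icho m (b + 5*j) := by
    rw [Finset.range_eq_Ico, ← Finset.sum_Ico_consecutive _ (Nat.zero_le d) (by omega), ← Finset.range_eq_Ico]
  have hzero : ∑ j ∈ Finset.range d, icho m (b + 5*j) = 0 := by
    apply Finset.sum_eq_zero
    intro j hj
    simp only [Finset.mem_range] at hj
    exact icho_neg m (by push_cast; omega)
  have hshift : ∑ j ∈ Finset.Ico d M, icho m (b + 5*j)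
      = ∑ j ∈ Finset.range (m + 1 + N), icho m (b % 5 + 5*j) := by
    rw [Finset.sum_Ico_eq_sum_range]
    have hMd : M - d = m + 1 + N := by omega
    rw [hMd]
    apply Finset.sum_congr rfl
    intro j hj
    congr 1
    push_cast
    omega
  rw [hsplit, hzero, hshift]
  ring

lemma CS_pascal (m : ℕ) (a : ℤ) : CS (m+1) a = CS m a + CS m (a-1) := by
  have h5 : (0:ℤ) ≤ a % 5 ∧ a % 5 < 5 := ⟨Int.emod_nonneg a (by norm_num), Int.emod_lt_of_pos a (by norm_num)⟩
  have e1 : CS (m+1) a = ∑ j ∈ Finset.range (m+2), (icho m (a % 5 + 5*j) + icho m (a % 5 + 5*j - 1)) := by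
    unfold CS
    apply Finset.sum_congr rfl
    intro j _
    exact icho_pascal m _
  rw [e1, Finset.sum_add_distrib]
  have w1 : ∑ j ∈ Finset.range (m+2), icho m (a % 5 + 5*j) = CS m a := by
    have := window m (a % 5) (m+2) (by omega) (by push_cast; omega)
    rwa [CS_congr m (show (a % 5) % 5 = a % 5 from by omega)] at this
  have w2 : ∑ j ∈ Finset.range (m+2), icho m (a % 5 + 5*j - 1) = CS m (a-1) := by
    have := window m (a % 5 - 1) (m+2) (by omega) (by push_cast; omega)
    rw [CS_congr m (show (a % 5 - 1) % 5 = (a - 1) % 5 from by omega)] at this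
    rw [← this]
    apply Finset.sum_congr rfl
    intro j _
    congr 1
    ring
  rw [w1, w2]

lemma CS_pascal2 (m : ℕ) (a : ℤ) : CS (m+2) a = CS m a + 2 * CS m (a-1) + CS m (a-2) := by
  have := CS_pascal (m+1) a
  rw [CS_pascal m a, CS_pascal m (a-1)] at this
  have e : a - 1 - 1 = a - 2 := by ring
  rw [e] at this
  linarith

lemma CS_symm (m : ℕ) (a : ℤ) : CS m a = CS m ((m:ℤ) - a) := by
  have h5 : (0:ℤ) ≤ a % 5 ∧ a % 5 < 5 := ⟨Int.emod_nonneg a (by norm_num), Int.emod_lt_of_pos a (by norm_num)⟩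
  have e1 : CS m a = ∑ j ∈ Finset.range (m+1), icho m ((m:ℤ) - a % 5 - 5*m + 5*j) := by
    unfold CS
    rw [← Finset.sum_range_reflect]
    apply Finset.sum_congr rfl
    intro j hj
    simp only [Finset.mem_range] at hj
    rw [icho_symm]
    congr 1
    have : ((m - j : ℕ) : ℤ) = (m:ℤ) - j := by omega
    push_cast [this]
    ring
  rw [e1]
  have := window m ((m:ℤ) - a % 5 - 5*m) (m+1) (by omega) (by push_cast; omega)
  rw [this, CS_congr m (show ((m:ℤ) - a % 5 - 5*m) % 5 = ((m:ℤ) - a) % 5 from by omega)]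

lemma key (k : ℕ) :
    CS (2*k+1) (k+4) - CS (2*k+1) (k+3) = Nat.fib (2*k) ∧
    CS (2*k+1) (k+5) - CS (2*k+1) (k+4) = Nat.fib (2*k+1) := by
  induction k with
  | zero =>
    constructor <;> · simp [CS, icho, Finset.sum_range_succ] <;> decide
  | succ k ih =>
    obtain ⟨hx, hy⟩ := ih
    have hm : 2*(k+1)+1 = (2*k+1) + 2 := by ring
    -- symmetry facts
    have s1 : CS (2*k+1) ((k:ℤ)+2) = CS (2*k+1) ((k:ℤ)+4) := by
      rw [CS_symm (2*k+1) ((k:ℤ)+2)]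
      apply CS_congr
      push_cast
      omega
    have s2 : CS (2*k+1) ((k:ℤ)+6) = CS (2*k+1) ((k:ℤ)+5) := by
      rw [CS_congr (2*k+1) (show ((k:ℤ)+6) % 5 = ((k:ℤ)+1) % 5 from by omega),
        CS_symm (2*k+1) ((k:ℤ)+1)]
      apply CS_congr
      push_cast
      omega
    have p1 := CS_pascal2 (2*k+1) ((k:ℤ)+6)
    have p2 := CS_pascal2 (2*k+1) ((k:ℤ)+5)
    have p3 := CS_pascal2 (2*k+1) ((k:ℤ)+4)
    have fib1 : (Nat.fib (2*(k+1)) : ℤ) = Nat.fib (2*k) + Nat.fib (2*k+1) := by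
      have : 2*(k+1) = (2*k) + 2 := by ring
      rw [this, Nat.fib_add_two]
      push_cast; ring
    have fib2 : (Nat.fib (2*(k+1)+1) : ℤ) = Nat.fib (2*k+1) + Nat.fib (2*(k+1)) := by
      have : 2*(k+1)+1 = (2*k+1) + 2 := by ring
      rw [this, Nat.fib_add_two]
      push_cast
      have : 2*(k+1) = 2*k+1+1 := by ring
      rw [this]
    constructor
    · have e : ((k:ℤ)+1)+4 = (k:ℤ)+5 ∧ ((k:ℤ)+1)+3 = (k:ℤ)+4 := by constructor <;> push_cast <;> ring
      push_cast [hm, e.1, e.2] at *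
      have e2 : (k:ℤ)+5-1 = (k:ℤ)+4 ∧ (k:ℤ)+5-2 = (k:ℤ)+3 ∧ (k:ℤ)+4-1 = (k:ℤ)+3 ∧ (k:ℤ)+4-2 = (k:ℤ)+2 := by
        refine ⟨by ring, by ring, by ring, by ring⟩
      rw [e2.1, e2.2.1] at p2
      rw [e2.2.2.1, e2.2.2.2] at p3
      rw [p2, p3, fib1]
      linarith
    · push_cast [hm] at *
      have e2 : (k:ℤ)+6-1 = (k:ℤ)+5 ∧ (k:ℤ)+6-2 = (k:ℤ)+4 ∧ (k:ℤ)+5-1 = (k:ℤ)+4 ∧ (k:ℤ)+5-2 = (k:ℤ)+3 := by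
              refine ⟨by ring, by ring, by ring, by ring⟩
      rw [e2.1, e2.2.1] at p1
      rw [e2.2.2.1, e2.2.2.2] at p2
      have e : ((k:ℤ)+1)+5 = (k:ℤ)+6 ∧ ((k:ℤ)+1)+4 = (k:ℤ)+5 := ⟨by ring, by ring⟩
      rw [e.1, e.2, p1, p2, fib2, fib1]
      linarith

lemma absorb (n k : ℕ) (hn : 1 ≤ n) (hk : 1 ≤ k) :
    (k:ℚ)/n * (icho (2*n) ((n:ℤ)-k) : ℚ) =
      (icho (2*n-1) ((n:ℤ)-k) : ℚ) - (icho (2*n-1) ((n:ℤ)-k-1) : ℚ) := by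
  have hn0 : (n:ℚ) ≠ 0 := by positivity
  rcases lt_trichotomy n k with h | h | h
  · rw [icho_neg _ (by omega), icho_neg _ (by omega), icho_neg _ (by omega)]
    simp
  · subst h
    have e0 : (n:ℤ) - n = 0 := by ring
    rw [e0]
    simp only [icho]
    norm_num
    omega
  · -- k < n
    obtain ⟨m', hm'⟩ : ∃ m' : ℕ, n - k = m' + 1 := ⟨n - k - 1, by omega⟩
    have e1 : (n:ℤ) - k = ((m' + 1 : ℕ) : ℤ) := by push_cast; omega
    have e2 : (n:ℤ) - k - 1 = ((m' : ℕ) : ℤ) := by push_cast; omega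
    have ich : ∀ (M : ℕ) (j : ℕ), icho M ((j:ℕ):ℤ) = (M.choose j : ℤ) := by
      intro M j
      simp [icho]
    rw [e2, e1, ich, ich, ich]
    have hpas : (2*n).choose (m'+1) = (2*n-1).choose m' + (2*n-1).choose (m'+1) := by
      have h2 : 2*n = (2*n-1) + 1 := by omega
      rw [h2, Nat.choose_succ_succ]
      simp
    have habs : (2*n) * ((2*n-1).choose m') = (2*n).choose (m'+1) * (m'+1) := by
      have := Nat.add_one_mul_choose_eq (2*n-1) m'
      have h2 : 2*n-1+1 = 2*n := by omega
      rwa [h2] at this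
    have hpasQ : ((2*n).choose (m'+1) : ℚ) = (2*n-1).choose m' + (2*n-1).choose (m'+1) := by
      exact_mod_cast congrArg (Nat.cast (R := ℚ)) hpas
    have habsQ : ((2*n : ℕ):ℚ) * ((2*n-1).choose m') = (2*n).choose (m'+1) * (m'+1) := by
      exact_mod_cast congrArg (Nat.cast (R := ℚ)) habs
    push_cast at hpasQ habsQ ⊢
    have hkq : (k:ℚ) = n - m' - 1 := by
      have : (k:ℤ) = n - m' - 1 := by omega
      exact_mod_cast congrArg (Int.cast (R := ℚ)) this
    field_simp
    rw [hkq]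
    nlinarith [hpasQ, habsQ]

lemma comb (m N : ℕ) (a : ℤ) (h1 : a ≤ 5*N - 5) (h2 : (m:ℤ) < a + 5*N + 5) :
    ∑ j ∈ Finset.range N, icho m (a - 5*j) + ∑ j ∈ Finset.range N, icho m (a + 5 + 5*j)
      = CS m a := by
  set b0 : ℤ := a - 5*N + 5 with hb0
  have e1 : ∑ j ∈ Finset.range N, icho m (a - 5*j) = ∑ j ∈ Finset.range N, icho m (b0 + 5*j) := by
    rw [← Finset.sum_range_reflect (fun j => icho m (b0 + 5*j)) N]
    apply Finset.sum_congr rfl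
    intro j hj
    simp only [Finset.mem_range] at hj
    congr 1
    have : ((N - 1 - j : ℕ) : ℤ) = (N:ℤ) - 1 - j := by omega
    rw [this]
    ring
  have e2 : ∑ j ∈ Finset.range N, icho m (a + 5 + 5*j) = ∑ j ∈ Finset.range N, icho m (b0 + 5*(N + j)) := by
    apply Finset.sum_congr rfl
    intro j hj
    congr 1
    push_cast
    ring
  rw [e1, e2]
  have e3 : ∑ j ∈ Finset.range N, icho m (b0 + 5*j) + ∑ j ∈ Finset.range N, icho m (b0 + 5*(N + j))
      = ∑ j ∈ Finset.range (N + N), icho m (b0 + 5*j) := by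
    rw [Finset.sum_range_add]
    congr 1
  rw [e3]
  have := window m b0 (N + N) (by omega) (by push_cast; omega)
  rw [this]
  apply CS_congr
  omega

lemma absorbQ (n k : ℕ) (t : ℤ) (hn : 1 ≤ n) (hk : 1 ≤ k) (ht : (n:ℤ) - k = t) :
    (k:ℚ)/n * (icho (2*n) t : ℚ) = (icho (2*n-1) t : ℚ) - (icho (2*n-1) (t-1) : ℚ) := by
  subst ht; exact absorb n k hn hk

/-- Identity (14):
`F_{2n-2} = Σ_{j≥0} [((5j+2)/n)·C(2n, n-5j-2) - ((5j+3)/n)·C(2n, n-5j-3)]` for `n ≥ 2`. -/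
theorem fib_even_catalan_formula (n : ℕ) (hn : 2 ≤ n) :
    (Nat.fib (2 * n - 2) : ℚ) =
      ∑ᶠ j : ℕ,
        ((5 * j + 2 : ℚ) / n * (icho (2 * n) ((n : ℤ) - 5 * j - 2) : ℚ) -
          (5 * j + 3 : ℚ) / n * (icho (2 * n) ((n : ℤ) - 5 * j - 3) : ℚ)) := by
  have hn1 : 1 ≤ n := by omega
  have hsupp : Function.support (fun j : ℕ =>
      ((5 * j + 2 : ℚ) / n * (icho (2 * n) ((n : ℤ) - 5 * j - 2) : ℚ) -
        (5 * j + 3 : ℚ) / n * (icho (2 * n) ((n : ℤ) - 5 * j - 3) : ℚ)))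
      ⊆ (Finset.range n : Set ℕ) := by
    intro j hj
    simp only [Function.mem_support] at hj
    simp only [Finset.coe_range, Set.mem_Iio]
    by_contra h
    push_neg at h
    apply hj
    rw [icho_neg _ (by push_cast; omega), icho_neg _ (by push_cast; omega)]
    simp
  rw [finsum_eq_sum_of_support_subset _ hsupp]
  have hterm : ∀ j ∈ Finset.range n,
      ((5 * (j:ℚ) + 2) / n * (icho (2 * n) ((n : ℤ) - 5 * j - 2) : ℚ) -
        (5 * (j:ℚ) + 3) / n * (icho (2 * n) ((n : ℤ) - 5 * j - 3) : ℚ))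
      = ((icho (2*n-1) ((n:ℤ) - 5*j - 2) - icho (2*n-1) ((n:ℤ) - 5*j - 2 - 1)
          - (icho (2*n-1) ((n:ℤ) - 5*j - 3) - icho (2*n-1) ((n:ℤ) - 5*j - 3 - 1)) : ℤ) : ℚ) := by
    intro j _
    have a2 := absorbQ n (5*j+2) ((n:ℤ) - 5*j - 2) hn1 (by omega) (by push_cast; ring)
    have a3 := absorbQ n (5*j+3) ((n:ℤ) - 5*j - 3) hn1 (by omega) (by push_cast; ring)
    have c2 : ((5*j+2 : ℕ):ℚ) = 5*(j:ℚ)+2 := by push_cast; ring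
    have c3 : ((5*j+3 : ℕ):ℚ) = 5*(j:ℚ)+3 := by push_cast; ring
    rw [c2] at a2
    rw [c3] at a3
    rw [a2, a3]
    push_cast
    ring
  rw [Finset.sum_congr rfl hterm]
  have hZ : ∑ j ∈ Finset.range n,
      (icho (2*n-1) ((n:ℤ) - 5*j - 2) - icho (2*n-1) ((n:ℤ) - 5*j - 2 - 1)
        - (icho (2*n-1) ((n:ℤ) - 5*j - 3) - icho (2*n-1) ((n:ℤ) - 5*j - 3 - 1)))
      = CS (2*n-1) ((n:ℤ)-2) - CS (2*n-1) ((n:ℤ)-3) := by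
    rw [← comb (2*n-1) n ((n:ℤ)-2) (by omega) (by omega),
        ← comb (2*n-1) n ((n:ℤ)-3) (by omega) (by omega)]
    rw [← Finset.sum_add_distrib, ← Finset.sum_add_distrib, ← Finset.sum_sub_distrib]
    apply Finset.sum_congr rfl
    intro j _
    have e1 : icho (2*n-1) ((n:ℤ)-5*j-2) = icho (2*n-1) ((n:ℤ)-2-5*j) := by congr 1; ring
    have e2 : icho (2*n-1) ((n:ℤ)-5*j-2-1) = icho (2*n-1) ((n:ℤ)-3-5*j) := by congr 1; ring
    have e3 : icho (2*n-1) ((n:ℤ)-5*j-3) = icho (2*n-1) ((n:ℤ)-3+5+5*j) := by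
      rw [icho_symm (2*n-1) ((n:ℤ)-5*j-3)]; congr 1; omega
    have e4 : icho (2*n-1) ((n:ℤ)-5*j-3-1) = icho (2*n-1) ((n:ℤ)-2+5+5*j) := by
      rw [icho_symm (2*n-1) ((n:ℤ)-5*j-3-1)]; congr 1; omega
    rw [e1, e2, e3, e4]
    ring
  have hfib : CS (2*n-1) ((n:ℤ)-2) - CS (2*n-1) ((n:ℤ)-3) = (Nat.fib (2*n-2) : ℤ) := by
    have hk := (key (n-1)).1
    have em : 2*(n-1)+1 = 2*n-1 := by omega
    have ef : 2*(n-1) = 2*n-2 := by omega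
    rw [em, ef] at hk
    have ca : ((n-1:ℕ):ℤ)+4 = (n:ℤ)+3 := by omega
    have cb : ((n-1:ℕ):ℤ)+3 = (n:ℤ)+2 := by omega
    rw [ca, cb] at hk
    rw [CS_congr (2*n-1) (show ((n:ℤ)-2) % 5 = ((n:ℤ)+3) % 5 from by omega),
        CS_congr (2*n-1) (show ((n:ℤ)-3) % 5 = ((n:ℤ)+2) % 5 from by omega)]
    exact hk
  rw [← Int.cast_sum, hZ, hfib]
  norm_num
end
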